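/- Let M be a model category. Let a : A₀ → A₁, b : B₀ → B₁, p : X₀ → X₁, q : Y₀ → Y₁ be morphisms of M, let ι : a → b be a morphism in Arrow M such that ι₀ : A₀ → B₀ is a cofibration in M and the corner map B₀ ⊔_{A₀} A₁ → B₁ of ι is a trivial cofibration in M, and let π : p → q be a morphism in Arrow M such that π₀ : X₀ → Y₀ is a trivial fibration in M and π₁ : X₁ → Y₁ is a fibration in M. Then for any morphisms u : a → p and v : b → q in Arrow M with π ∘ u = v ∘ ι, there exists a morphism ℓ : b → p in Arrow M with ℓ ∘ ι = u and π ∘ ℓ = v. -/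

import Mathlib

open CategoryTheory CategoryTheory.Limits

universe v u

/-- `f` is a retract of `g` in the arrow category. -/
def IsRetract {C : Type u} [Category.{v} C] {X Y X' Y' : C} (f : X ⟶ Y) (g : X' ⟶ Y') : Prop :=
  ∃ (i : X ⟶ X') (r : X' ⟶ X) (i' : Y ⟶ Y') (r' : Y' ⟶ Y),
    i ≫ r = 𝟙 X ∧ i' ≫ r' = 𝟙 Y ∧ i ≫ g = f ≫ i' ∧ g ≫ r' = r ≫ f

/-- A model structure on a category: three classes of morphisms (weak equivalences,
cofibrations, fibrations) satisfying Quillen's axioms (two-out-of-three, closure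
under retracts, lifting, and factorization). -/
structure ModelStructure (C : Type u) [Category.{v} C] where
  W : MorphismProperty C
  Cof : MorphismProperty C
  Fib : MorphismProperty C
  w_comp : ∀ {X Y Z : C} (f : X ⟶ Y) (g : Y ⟶ Z), W f → W g → W (f ≫ g)
  w_cancel_left : ∀ {X Y Z : C} (f : X ⟶ Y) (g : Y ⟶ Z), W f → W (f ≫ g) → W g
  w_cancel_right : ∀ {X Y Z : C} (f : X ⟶ Y) (g : Y ⟶ Z), W g → W (f ≫ g) → W f
  w_retract : ∀ {X Y X' Y' : C} (f : X ⟶ Y) (g : X' ⟶ Y'), IsRetract f g → W g → W f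
  cof_retract : ∀ {X Y X' Y' : C} (f : X ⟶ Y) (g : X' ⟶ Y'), IsRetract f g → Cof g → Cof f
  fib_retract : ∀ {X Y X' Y' : C} (f : X ⟶ Y) (g : X' ⟶ Y'), IsRetract f g → Fib g → Fib f
  lift_cof_trivFib : ∀ {A B X Y : C} (i : A ⟶ B) (p : X ⟶ Y),
    Cof i → Fib p → W p → HasLiftingProperty i p
  lift_trivCof_fib : ∀ {A B X Y : C} (i : A ⟶ B) (p : X ⟶ Y),
    Cof i → W i → Fib p → HasLiftingProperty i p
  factor_cof_trivFib : ∀ {X Y : C} (f : X ⟶ Y), ∃ (Z : C) (g : X ⟶ Z) (h : Z ⟶ Y),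
    Cof g ∧ Fib h ∧ W h ∧ g ≫ h = f
  factor_trivCof_fib : ∀ {X Y : C} (f : X ⟶ Y), ∃ (Z : C) (g : X ⟶ Z) (h : Z ⟶ Y),
    Cof g ∧ W g ∧ Fib h ∧ g ≫ h = f

variable {M : Type u} [Category.{v} M]

/-- An object is cofibrant if the map from the initial object is a cofibration. -/
def ModelStructure.Cofibrant [HasInitial M] (m : ModelStructure M) (X : M) : Prop :=
  m.Cof (initial.to X)

section Latching

variable {P : Type} [Preorder P] [HasColimitsOfSize.{0, 0} M]

/-- The latching object of `F : P ⥤ M` at `x`: the colimit of `F` over the full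
subcategory of all `y < x`. -/
noncomputable def latchingObj (F : P ⥤ M) (x : P) : M :=
  colimit (ObjectProperty.ι (fun y : P => y < x) ⋙ F)

/-- The canonical (latching) map `L_x F ⟶ F x`. -/
noncomputable def latchingMap (F : P ⥤ M) (x : P) : latchingObj F x ⟶ F.obj x :=
  colimit.desc (ObjectProperty.ι (fun y : P => y < x) ⋙ F)
    { pt := F.obj x
      ι :=
        { app := fun y => F.map (homOfLE y.property.le)
          naturality := by
            intro a b f
            dsimp
            rw [Category.comp_id, ← F.map_comp]
            rfl } }

/-- The map induced by a natural transformation on latching objects. -/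
noncomputable def latchingObjHom {F G : P ⥤ M} (τ : F ⟶ G) (x : P) :
    latchingObj F x ⟶ latchingObj G x :=
  colimMap (Functor.whiskerLeft (ObjectProperty.ι (fun y : P => y < x)) τ)

lemma latching_square {F G : P ⥤ M} (τ : F ⟶ G) (x : P) :
    latchingMap F x ≫ τ.app x = latchingObjHom τ x ≫ latchingMap G x := by
  apply colimit.hom_ext
  intro y
  dsimp only [latchingMap, latchingObjHom]
  erw [colimit.ι_desc_assoc, ι_colimMap_assoc, colimit.ι_desc]
  simp

/-- The relative latching map of `τ : F ⟶ G` at `x`: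
the induced map `(L_x G) ⊔_{L_x F} F x ⟶ G x`. -/
noncomputable def relLatchingMap {F G : P ⥤ M} (τ : F ⟶ G) (x : P) :
    pushout (latchingMap F x) (latchingObjHom τ x) ⟶ G.obj x :=
  pushout.desc (τ.app x) (latchingMap G x) (latching_square τ x)

end Latching

/-- The corner map (pushout-corner map) of a commutative square `τ : f ⟶ g`
in the arrow category: the canonical morphism `Y₀ ⊔_{X₀} X₁ ⟶ Y₁`. -/
noncomputable def cornerMap [HasPushouts M] {f g : Arrow M} (τ : f ⟶ g) :
    pushout τ.left f.hom ⟶ g.right :=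
  pushout.desc g.hom τ.right (Arrow.w τ)

/-! Lift first in the square of domains, where `ι.left` is a cofibration and `π.left` a trivial
fibration. That lift, followed by `p.hom`, together with `u.right` defines a map out of the pushout
`b.left ⊔_{a.left} a.right`, and lifting the corner map against the fibration `π.right` gives the
codomain component. -/

section CornerMap

variable {C : Type*} [Category C] [HasPushouts C]

lemma hasLiftingProperty_of_left_of_cornerMap {a b p q : Arrow C} (ι : a ⟶ b) (π : p ⟶ q)
    [HasLiftingProperty ι.left π.left] [HasLiftingProperty (cornerMap ι) π.right] :
    HasLiftingProperty ι π where
  sq_hasLift {u v} sq := by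
    have sq₀ : CommSq u.left ι.left π.left v.left :=
      ⟨by simpa using congrArg CommaMorphism.left sq.w⟩
    have hw₁ : u.right ≫ π.right = ι.right ≫ v.right := by
      simpa using congrArg CommaMorphism.right sq.w
    have sq₁ : CommSq (pushout.desc (sq₀.lift ≫ p.hom) u.right
        (by rw [← Category.assoc, sq₀.fac_left, Arrow.w u])) (cornerMap ι) π.right v.right := by
      refine ⟨pushout.hom_ext ?_ ?_⟩
      · rw [pushout.inl_desc_assoc, cornerMap, pushout.inl_desc_assoc, Category.assoc,
          ← Arrow.w π, ← Category.assoc, sq₀.fac_right, Arrow.w v]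
      · rw [pushout.inr_desc_assoc, cornerMap, pushout.inr_desc_assoc, hw₁]
    have hw : sq₀.lift ≫ p.hom = b.hom ≫ sq₁.lift := by
      have := pushout.inl _ _ ≫= sq₁.fac_left
      dsimp only [cornerMap] at this
      rwa [pushout.inl_desc_assoc, pushout.inl_desc, eq_comm] at this
    have hfac : ι.right ≫ sq₁.lift = u.right := by
      have := pushout.inr _ _ ≫= sq₁.fac_left
      dsimp only [cornerMap] at this
      rwa [pushout.inr_desc_assoc, pushout.inr_desc] at this
    exact ⟨⟨⟨Arrow.homMk sq₀.lift sq₁.lift hw, by ext <;> simp [hfac], by ext <;> simp⟩⟩⟩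

end CornerMap

theorem statement3_general [HasColimits M] (m : ModelStructure M)
    {a b p q : Arrow M} (ι : a ⟶ b) (π : p ⟶ q)
    (hι₀ : m.Cof ι.left)
    (hιc : m.Cof (cornerMap ι) ∧ m.W (cornerMap ι))
    (hπ₀ : m.Fib π.left ∧ m.W π.left)
    (hπ₁ : m.Fib π.right)
    (u : a ⟶ p) (v : b ⟶ q) (hsq : u ≫ π = ι ≫ v) :
    ∃ ℓ : b ⟶ p, ι ≫ ℓ = u ∧ ℓ ≫ π = v := by
  have := m.lift_cof_trivFib ι.left π.left hι₀ hπ₀.1 hπ₀.2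
  have := m.lift_trivCof_fib (cornerMap ι) π.right hιc.1 hιc.2 hπ₁
  have := hasLiftingProperty_of_left_of_cornerMap ι π
  have sq : CommSq u ι π v := ⟨hsq⟩
  exact ⟨sq.lift, sq.fac_left, sq.fac_right⟩

/-- In `Arrow M`, every morphism `ι : a ⟶ b` with `ι.left` a
cofibration and corner map a trivial cofibration has the left lifting property with
respect to every morphism `π : p ⟶ q` with `π.left` a trivial fibration and `π.right`
a fibration. -/
theorem statement3 [HasLimits M] [HasColimits M] (m : ModelStructure M)
    {a b p q : Arrow M} (ι : a ⟶ b) (π : p ⟶ q)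
    (hι₀ : m.Cof ι.left)
    (hιc : m.Cof (cornerMap ι) ∧ m.W (cornerMap ι))
    (hπ₀ : m.Fib π.left ∧ m.W π.left)
    (hπ₁ : m.Fib π.right)
    (u : a ⟶ p) (v : b ⟶ q) (hsq : u ≫ π = ι ≫ v) :
    ∃ ℓ : b ⟶ p, ι ≫ ℓ = u ∧ ℓ ≫ π = v :=
  statement3_general m ι π hι₀ hιc hπ₀ hπ₁ u v hsq
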